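/- arXiv:2204.11016 — 7 statements merged into one kernel-verified Lean document; each statement's English description precedes it below -/
import Mathlib

section
/- Let R > 0, s > 0, γ > 2, let n be a nonzero integer, and let ω ∈ ℝ. Suppose u ∈ C([0,R]) ∩ C²((0,R)) satisfies the saturable vortex equation u''(r) + u'(r)/r − (n²/r²)·u(r) − 2u(r)³/(1 + s·u(r)²)^γ = 2ω·u(r) on (0,R), with u(0) = u(R) = 0, ∫₀^R u'(r)² r dr < ∞ and ∫₀^R u(r)²/r dr < ∞, and u is not identically zero on (0,R). Then ω < 0. -/
open MeasureTheory Filter Set Topology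

lemma saturable_aux
    (R s γ : ℝ) (hR : 0 < R) (hs : 0 < s)
    (n : ℤ) (hn : n ≠ 0) (ω : ℝ) (hω : 0 ≤ ω)
    (u u' u'' : ℝ → ℝ)
    (hu : ContinuousOn u (Set.Icc 0 R))
    (hu' : ∀ r ∈ Set.Ioo (0 : ℝ) R, HasDerivAt u (u' r) r)
    (hu'' : ∀ r ∈ Set.Ioo (0 : ℝ) R, HasDerivAt u' (u'' r) r)
    (heq : ∀ r ∈ Set.Ioo (0 : ℝ) R,
      u'' r + u' r / r - ((n : ℝ) ^ 2 / r ^ 2) * u r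
        - 2 * (u r) ^ 3 / (1 + s * (u r) ^ 2) ^ γ = 2 * ω * u r)
    (hbc0 : u 0 = 0) (hbcR : u R = 0)
    (hpos : ∃ r ∈ Set.Ioo (0 : ℝ) R, 0 < u r) : False := by
  obtain ⟨rp, hrp, hup⟩ := hpos
  -- maximum of u on [0,R]
  obtain ⟨r₀, hr₀mem, hmax⟩ := isCompact_Icc.exists_isMaxOn
    (Set.nonempty_Icc.2 hR.le) hu
  have hum : 0 < u r₀ := lt_of_lt_of_le hup (hmax (Set.mem_Icc.2 ⟨hrp.1.le, hrp.2.le⟩))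
  have hr₀ : r₀ ∈ Set.Ioo (0 : ℝ) R := by
    rcases hr₀mem.1.lt_or_eq with h0 | h0
    · rcases hr₀mem.2.lt_or_eq with h1 | h1
      · exact ⟨h0, h1⟩
      · exact absurd (h1 ▸ hbcR) hum.ne'
    · exact absurd (h0 ▸ hbc0) hum.ne'
  have hloc : IsLocalMax u r₀ := hmax.isLocalMax (Icc_mem_nhds hr₀.1 hr₀.2)
  have hu'0 : u' r₀ = 0 := hloc.hasDerivAt_eq_zero (hu' r₀ hr₀)
  -- u'' r₀ > 0 from the equation
  have hden : (0 : ℝ) < (1 + s * (u r₀) ^ 2) ^ γ :=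
    Real.rpow_pos_of_pos (by positivity) γ
  have hu''pos : 0 < u'' r₀ := by
    have := heq r₀ hr₀
    rw [hu'0, zero_div, add_zero] at this
    have hn2 : (0 : ℝ) < (n : ℝ) ^ 2 := by
      have : (n : ℝ) ≠ 0 := Int.cast_ne_zero.2 hn
      positivity
    have h1 : 0 < ((n : ℝ) ^ 2 / r₀ ^ 2) * u r₀ := by
      have : (0 : ℝ) < r₀ := hr₀.1
      positivity
    have h2 : 0 < 2 * (u r₀) ^ 3 / (1 + s * (u r₀) ^ 2) ^ γ := by positivity
    nlinarith [mul_nonneg (mul_nonneg (by norm_num : (0:ℝ) ≤ 2) hω) hum.le]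
  -- u' is positive just right of r₀
  have hd : HasDerivAt u' (u'' r₀) r₀ := hu'' r₀ hr₀
  have hslope : Filter.Tendsto (slope u' r₀) (𝓝[≠] r₀) (𝓝 (u'' r₀)) :=
    hasDerivAt_iff_tendsto_slope.1 hd
  have hev : ∀ᶠ x in 𝓝[≠] r₀, 0 < slope u' r₀ x :=
    hslope.eventually (eventually_gt_nhds hu''pos)
  have hev' : ∀ᶠ x in 𝓝[>] r₀, 0 < u' x := by
    have hmono : 𝓝[>] r₀ ≤ 𝓝[≠] r₀ :=
      nhdsWithin_mono _ (fun x hx => ne_of_gt hx)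
    filter_upwards [hev.filter_mono hmono, self_mem_nhdsWithin] with x hx hx'
    have hxr : (0:ℝ) < x - r₀ := sub_pos.2 hx'
    have := mul_pos hx hxr
    rw [slope_def_field] at this
    rw [div_mul_cancel₀ _ hxr.ne'] at this
    rw [hu'0, sub_zero] at this
    exact this
  have hevR : ∀ᶠ x in 𝓝[>] r₀, x < R :=
    eventually_nhdsWithin_of_eventually_nhds (eventually_lt_nhds hr₀.2)
  obtain ⟨b, hb, hsub⟩ := mem_nhdsGT_iff_exists_Ioo_subset.1 (hev'.and hevR)
  set c := (r₀ + b) / 2 with hc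
  have hcmem : c ∈ Set.Ioo r₀ b := ⟨by simp [hc]; linarith [hb.out], by simp [hc]; linarith [hb.out]⟩
  have hcR : c < R := (hsub hcmem).2
  -- MVT on [r₀, c]
  obtain ⟨ξ, hξ, hξeq⟩ := exists_hasDerivAt_eq_slope u u' hcmem.1
    (hu.mono (Set.Icc_subset_Icc hr₀.1.le hcR.le))
    (fun x hx => hu' x ⟨lt_trans hr₀.1 hx.1, lt_trans hx.2 hcR⟩)
  have hξpos : 0 < u' ξ := (hsub ⟨hξ.1, lt_trans hξ.2 hcmem.2⟩).1
  rw [hξeq] at hξpos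
  have : 0 < u c - u r₀ := by
    have hden2 : (0:ℝ) < c - r₀ := sub_pos.2 hcmem.1
    exact (div_pos_iff_of_pos_right hden2).1 hξpos
  have hle : u c ≤ u r₀ := hmax (Set.mem_Icc.2 ⟨le_trans hr₀.1.le hcmem.1.le, hcR.le⟩)
  linarith

/-- Any nontrivial finite-energy solution of the saturable vortex equation with
homogeneous boundary conditions has negative wave propagation constant `ω`. -/
theorem saturable_omega_negative
    (R s γ : ℝ) (hR : 0 < R) (hs : 0 < s) (hγ : 2 < γ)
    (n : ℤ) (hn : n ≠ 0) (ω : ℝ)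
    (u u' u'' : ℝ → ℝ)
    (hu : ContinuousOn u (Set.Icc 0 R))
    (hu' : ∀ r ∈ Set.Ioo (0 : ℝ) R, HasDerivAt u (u' r) r)
    (hu'' : ∀ r ∈ Set.Ioo (0 : ℝ) R, HasDerivAt u' (u'' r) r)
    (hu''c : ContinuousOn u'' (Set.Ioo (0 : ℝ) R))
    (heq : ∀ r ∈ Set.Ioo (0 : ℝ) R,
      u'' r + u' r / r - ((n : ℝ) ^ 2 / r ^ 2) * u r
        - 2 * (u r) ^ 3 / (1 + s * (u r) ^ 2) ^ γ = 2 * ω * u r)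
    (hbc0 : u 0 = 0) (hbcR : u R = 0)
    (hint1 : IntegrableOn (fun r => (u' r) ^ 2 * r) (Set.Ioc (0 : ℝ) R))
    (hint2 : IntegrableOn (fun r => (u r) ^ 2 / r) (Set.Ioc (0 : ℝ) R))
    (hnontriv : ∃ r ∈ Set.Ioo (0 : ℝ) R, u r ≠ 0) :
    ω < 0 := by
  by_contra h
  push_neg at h
  obtain ⟨r, hr, hur⟩ := hnontriv
  rcases hur.lt_or_gt with hneg | hpos
  · -- apply aux to -u
    refine saturable_aux R s γ hR hs n hn ω h
      (fun x => -u x) (fun x => -u' x) (fun x => -u'' x)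
      hu.neg (fun x hx => (hu' x hx).neg) (fun x hx => (hu'' x hx).neg)
      (fun x hx => ?_) (by simp [hbc0]) (by simp [hbcR])
      ⟨r, hr, by simpa using hneg⟩
    have := heq x hx
    have hsq : (-u x) ^ 2 = (u x) ^ 2 := by ring
    rw [hsq]
    ring_nf
    ring_nf at this
    linarith
  · exact saturable_aux R s γ hR hs n hn ω h u u' u'' hu hu' hu'' heq hbc0 hbcR ⟨r, hr, hpos⟩
end

section
/- Let α, β > 0, ω > 0, and let n be a nonzero integer. Suppose u ∈ C([0,∞)) ∩ C²((0,∞)) satisfies the Gross–Pitaevskii vortex equation u''(r) + u'(r)/r − (n²/r² + 2ω)·u(r) − 2α·u(r)³·ln(u(r)²/β) = 0 on (0,∞) and u(0) = 0. Then lim_{r→0⁺} r·u'(r) = 0. -/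
/-!
Let `m = |n|` and `W(r) = r ^ m * (r u'(r) - m u(r))`, which is `r` times the Wronskian of
`r ^ m` and `u`. The equation gives `W' = r ^ (m + 1) * (2 ω u + 2 α u³ log (u² / β))`, and the
bracket is bounded near `0` because `u` is continuous on `[0, 1]`; so `W` varies by `O(r ^ (m + 2))`
on `(0, r]`. If `|W(r)|` exceeded that bound, `W` would keep a sign on `(0, r]`, away from `0`,
and then `s u'(s) ≥ ε + m u(s) ≥ ε / 2` near `0`, forcing `u(s) ≤ C + (ε / 2) log s → -∞`
(or the symmetric statement), against `u(s) → 0`. Hence `|r u' - m u| = O(r²)`, and `r u' → 0`.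
-/

open Filter Set Topology

theorem continuous_pow_three_mul_log_sq_div (β : ℝ) :
    Continuous fun x : ℝ => x ^ 3 * Real.log (x ^ 2 / β) := by
  rcases eq_or_ne β 0 with rfl | hβ
  · simpa using continuous_const
  · have h : (fun x : ℝ => x ^ 3 * Real.log (x ^ 2 / β))
        = fun x => β * x * (x ^ 2 / β * Real.log (x ^ 2 / β)) := by
      ext x; field_simp
    rw [h]
    exact (continuous_const.mul continuous_id).mul
      (Real.continuous_mul_log.comp (continuous_pow 2 |>.div_const β))

theorem not_eventually_le_mul_deriv_of_tendsto {f f' : ℝ → ℝ} {L ε : ℝ} (hε : 0 < ε)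
    (hf : Tendsto f (𝓝[>] 0) (𝓝 L)) (hf' : ∀ᶠ r in 𝓝[>] 0, HasDerivAt f (f' r) r) :
    ¬ ∀ᶠ r in 𝓝[>] (0 : ℝ), ε ≤ r * f' r := by
  intro hle
  obtain ⟨δ, hδ, hsub⟩ := mem_nhdsGT_iff_exists_Ioo_subset.mp (hf'.and hle)
  rw [mem_Ioi] at hδ
  have hmono : MonotoneOn (fun r => f r - ε * Real.log r) (Ioo 0 δ) := by
    refine monotoneOn_of_hasDerivWithinAt_nonneg (convex_Ioo 0 δ)
      (f' := fun r => f' r - ε * r⁻¹) ?_ ?_ ?_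
    · intro r hr
      exact ((hsub hr).1.continuousAt.sub
        (continuousAt_const.mul (Real.continuousAt_log hr.1.ne'))).continuousWithinAt
    · intro r hr
      rw [interior_Ioo] at hr
      exact ((hsub hr).1.sub ((Real.hasDerivAt_log hr.1.ne').const_mul ε)).hasDerivWithinAt
    · intro r hr
      rw [interior_Ioo] at hr
      have := (hsub hr).2
      rw [sub_nonneg, ← div_eq_mul_inv, div_le_iff₀ hr.1]
      linarith
  have hb : δ / 2 ∈ Ioo 0 δ := ⟨by positivity, by linarith⟩
  have hbound : ∀ᶠ r in 𝓝[>] 0, f r ≤ f (δ / 2) - ε * Real.log (δ / 2) + ε * Real.log r := by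
    filter_upwards [Ioo_mem_nhdsGT (half_pos hδ)] with r hr
    have := hmono ⟨hr.1, hr.2.trans hb.2⟩ hb hr.2.le
    linarith
  have hbot : Tendsto (fun r => f (δ / 2) - ε * Real.log (δ / 2) + ε * Real.log r) (𝓝[>] 0) atBot :=
    tendsto_atBot_add_const_left _ _ (Real.tendsto_log_nhdsGT_zero.const_mul_atBot hε)
  obtain ⟨r, hr, hlow, hup⟩ := (hbound.and ((hf.eventually (eventually_gt_nhds (sub_one_lt L))).and
    (hbot.eventually_le_atBot (L - 1)))).exists
  linarith

def radialWronskian (m : ℕ) (u u' : ℝ → ℝ) (r : ℝ) : ℝ :=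
  r ^ m * (r * u' r - m * u r)

theorem hasDerivAt_radialWronskian {u u' u'' : ℝ → ℝ} (m : ℕ) {r : ℝ} (hr : r ≠ 0)
    (hu : HasDerivAt u (u' r) r) (hu' : HasDerivAt u' (u'' r) r) :
    HasDerivAt (radialWronskian m u u')
      (r ^ (m + 1) * (u'' r + u' r / r - m ^ 2 / r ^ 2 * u r)) r := by
  have h : HasDerivAt (fun x => x ^ m * (x * u' x - m * u x))
      (m * r ^ (m - 1) * (r * u' r - m * u r) + r ^ m * (1 * u' r + r * u'' r - m * u' r)) r :=
    (hasDerivAt_pow m r).mul (((hasDerivAt_id' r).mul hu').sub (hu.const_mul (m : ℝ)))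
  refine h.congr_deriv ?_
  rcases m with _ | m
  · field_simp; ring
  · rw [add_tsub_cancel_right]
    field_simp
    push_cast
    ring

theorem radialWronskian_le {u u' : ℝ → ℝ} {m : ℕ} {r K : ℝ}
    (hu : Tendsto u (𝓝[>] 0) (𝓝 0)) (hu' : ∀ s ∈ Ioi 0, HasDerivAt u (u' s) s) (hr : 0 < r)
    (hK : ∀ s ∈ Ioc 0 r, radialWronskian m u u' r - radialWronskian m u u' s ≤ K) :
    radialWronskian m u u' r ≤ K := by
  by_contra! hlt
  set ε := (radialWronskian m u u' r - K) / r ^ m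
  have hε : 0 < ε := div_pos (sub_pos.mpr hlt) (pow_pos hr m)
  refine not_eventually_le_mul_deriv_of_tendsto (half_pos hε) hu
    (eventually_nhdsWithin_of_forall hu') ?_
  have hsmall : ∀ᶠ s in 𝓝[>] 0, -(ε / 2) < m * u s := by
    have hmu : Tendsto (fun s => m * u s) (𝓝[>] 0) (𝓝 0) := by simpa using hu.const_mul (m : ℝ)
    exact hmu.eventually (eventually_gt_nhds (neg_lt_zero.mpr (half_pos hε)))
  filter_upwards [hsmall, Ioc_mem_nhdsGT hr] with s hsmall hs
  have hflux : ε ≤ s * u' s - m * u s := by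
    have hW : radialWronskian m u u' r - K ≤ s ^ m * (s * u' s - m * u s) := by
      have := hK s hs
      simp only [radialWronskian] at this ⊢
      linarith
    calc ε ≤ (radialWronskian m u u' r - K) / s ^ m :=
          div_le_div_of_nonneg_left (sub_pos.mpr hlt).le (pow_pos hs.1 m)
            (pow_le_pow_left₀ hs.1.le hs.2 m)
      _ ≤ s * u' s - m * u s := by
          rw [div_le_iff₀' (pow_pos hs.1 m)]; exact hW
  linarith

theorem abs_radialWronskian_le {u u' : ℝ → ℝ} {m : ℕ} {r K : ℝ}
    (hu : Tendsto u (𝓝[>] 0) (𝓝 0)) (hu' : ∀ s ∈ Ioi 0, HasDerivAt u (u' s) s) (hr : 0 < r)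
    (hK : ∀ s ∈ Ioc 0 r, |radialWronskian m u u' r - radialWronskian m u u' s| ≤ K) :
    |radialWronskian m u u' r| ≤ K := by
  have hneg : radialWronskian m (fun s => -u s) (fun s => -u' s) = -radialWronskian m u u' := by
    ext s; simp only [radialWronskian, Pi.neg_apply]; ring
  have hupper := radialWronskian_le (u := fun s => -u s) (u' := fun s => -u' s) (m := m) (K := K)
    (by simpa using hu.neg) (fun s hs => (hu' s hs).neg) hr fun s hs => by
      rw [hneg, Pi.neg_apply, Pi.neg_apply, neg_sub_neg]
      exact (le_abs_self _).trans ((abs_sub_comm _ _).trans_le (hK s hs))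
  rw [hneg, Pi.neg_apply] at hupper
  exact abs_le.mpr ⟨by linarith,
    radialWronskian_le hu hu' hr fun s hs => (le_abs_self _).trans (hK s hs)⟩

theorem tendsto_mul_deriv_of_abs_deriv_radialWronskian_le {u u' W' : ℝ → ℝ} {m : ℕ} {C : ℝ}
    (hu : Tendsto u (𝓝[>] 0) (𝓝 0)) (hu' : ∀ r ∈ Ioi 0, HasDerivAt u (u' r) r)
    (hW : ∀ r ∈ Ioc 0 1, HasDerivAt (radialWronskian m u u') (W' r) r)
    (hW' : ∀ r ∈ Ioc 0 1, |W' r| ≤ C * r ^ (m + 1)) :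
    Tendsto (fun r => r * u' r) (𝓝[>] 0) (𝓝 0) := by
  have hflux : ∀ r ∈ Ioc (0 : ℝ) 1, |r * u' r - m * u r| ≤ C * r ^ 2 := by
    intro r hr
    have hC : 0 ≤ C :=
      (mul_nonneg_iff_of_pos_right (pow_pos hr.1 _)).mp ((abs_nonneg _).trans (hW' r hr))
    have hWr : |radialWronskian m u u' r| ≤ C * r ^ (m + 1) * r := by
      refine abs_radialWronskian_le hu hu' hr.1 fun s hs => ?_
      have hsr : Icc s r ⊆ Ioc 0 1 := (Icc_subset_Ioc_iff hs.2).mpr ⟨hs.1, hr.2⟩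
      have hmvt := norm_image_sub_le_of_norm_deriv_le_segment' (C := C * r ^ (m + 1))
        (fun x hx => (hW x (hsr hx)).hasDerivWithinAt)
        (fun x hx => (hW' x (hsr (Ico_subset_Icc_self hx))).trans
          (by have := (hsr (Ico_subset_Icc_self hx)).1; gcongr; exact hx.2.le))
        r (right_mem_Icc.mpr hs.2)
      rw [Real.norm_eq_abs] at hmvt
      exact hmvt.trans
        (mul_le_mul_of_nonneg_left (by linarith [hs.1]) (mul_nonneg hC (pow_nonneg hr.1.le _)))
    rw [radialWronskian, abs_mul, abs_of_pos (pow_pos hr.1 m)] at hWr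
    rw [show C * r ^ (m + 1) * r = r ^ m * (C * r ^ 2) by ring] at hWr
    exact le_of_mul_le_mul_left hWr (pow_pos hr.1 m)
  have hsq : Tendsto (fun r : ℝ => C * r ^ 2) (𝓝[>] 0) (𝓝 0) := by
    simpa using (((continuous_pow 2).tendsto (0 : ℝ)).const_mul C).mono_left nhdsWithin_le_nhds
  have hp : Tendsto (fun r => r * u' r - m * u r) (𝓝[>] 0) (𝓝 0) :=
    squeeze_zero_norm' (by filter_upwards [Ioc_mem_nhdsGT zero_lt_one] using hflux) hsq
  simpa using hp.add (hu.const_mul (m : ℝ))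

theorem gp_boundary_flux_zero_general
    (α β : ℝ) (ω : ℝ)
    (n : ℤ)
    (u u' u'' : ℝ → ℝ)
    (hu : ContinuousOn u (Set.Ici (0 : ℝ)))
    (hu' : ∀ r ∈ Set.Ioi (0 : ℝ), HasDerivAt u (u' r) r)
    (hu'' : ∀ r ∈ Set.Ioi (0 : ℝ), HasDerivAt u' (u'' r) r)
    (heq : ∀ r ∈ Set.Ioi (0 : ℝ),
      u'' r + u' r / r - ((n : ℝ) ^ 2 / r ^ 2 + 2 * ω) * u r
        - 2 * α * (u r) ^ 3 * Real.log ((u r) ^ 2 / β) = 0)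
    (hbc0 : u 0 = 0) :
    Tendsto (fun r => r * u' r) (nhdsWithin 0 (Set.Ioi (0 : ℝ))) (nhds 0) := by
  set m := n.natAbs
  set g : ℝ → ℝ := fun x => 2 * ω * x + 2 * α * (x ^ 3 * Real.log (x ^ 2 / β))
  have hg : Continuous g :=
    (continuous_const.mul continuous_id).add
      (continuous_const.mul (continuous_pow_three_mul_log_sq_div β))
  have hu0 : Tendsto u (𝓝[>] 0) (𝓝 0) := by
    simpa [hbc0] using ((hu 0 self_mem_Ici).mono Ioi_subset_Ici_self).tendsto
  obtain ⟨C, hC⟩ : ∃ C, ∀ r ∈ Icc (0 : ℝ) 1, ‖g (u r)‖ ≤ C :=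
    isCompact_Icc.exists_bound_of_continuousOn
      (hg.comp_continuousOn (hu.mono Icc_subset_Ici_self))
  refine tendsto_mul_deriv_of_abs_deriv_radialWronskian_le (m := m) (C := C)
    (W' := fun r => r ^ (m + 1) * g (u r)) hu0 hu' (fun r hr => ?_) (fun r hr => ?_)
  · convert hasDerivAt_radialWronskian m hr.1.ne' (hu' r hr.1) (hu'' r hr.1) using 2
    have hm : (n : ℝ) ^ 2 = (m : ℝ) ^ 2 := by simp [m, sq_abs]
    have := heq r hr.1
    rw [hm] at this
    simp only [g]
    linarith
  · rw [abs_mul, abs_pow, abs_of_pos hr.1, mul_comm]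
    exact mul_le_mul_of_nonneg_right (hC r (Ioc_subset_Icc_self hr)) (pow_nonneg hr.1.le _)

/-- For a solution of the Gross–Pitaevskii vortex equation with `u(0) = 0`,
one has `r·u'(r) → 0` as `r → 0⁺`. -/
theorem gp_boundary_flux_zero
    (α β : ℝ) (hα : 0 < α) (hβ : 0 < β) (ω : ℝ) (hω : 0 < ω)
    (n : ℤ) (hn : n ≠ 0)
    (u u' u'' : ℝ → ℝ)
    (hu : ContinuousOn u (Set.Ici (0 : ℝ)))
    (hu' : ∀ r ∈ Set.Ioi (0 : ℝ), HasDerivAt u (u' r) r)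
    (hu'' : ∀ r ∈ Set.Ioi (0 : ℝ), HasDerivAt u' (u'' r) r)
    (hu''c : ContinuousOn u'' (Set.Ioi (0 : ℝ)))
    (heq : ∀ r ∈ Set.Ioi (0 : ℝ),
      u'' r + u' r / r - ((n : ℝ) ^ 2 / r ^ 2 + 2 * ω) * u r
        - 2 * α * (u r) ^ 3 * Real.log ((u r) ^ 2 / β) = 0)
    (hbc0 : u 0 = 0) :
    Tendsto (fun r => r * u' r) (nhdsWithin 0 (Set.Ioi (0 : ℝ))) (nhds 0) :=
  gp_boundary_flux_zero_general α β ω n u u' u'' hu hu' hu'' heq hbc0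
end

section
/- Let α, β > 0, ω > 0, and let n be a nonzero integer. Suppose u ∈ C²((0,∞)) satisfies the Gross–Pitaevskii vortex equation u''(r) + u'(r)/r − (n²/r² + 2ω)·u(r) − 2α·u(r)³·ln(u(r)²/β) = 0 on (0,∞), u is not identically zero, and lim_{r→∞} u(r) = 0. Then u decays exponentially at infinity: there exist constants C > 0, c > 0 and r₁ > 0 such that |u(r)| ≤ C·e^{-c·r} for all r ≥ r₁. -/
/-!
Far out, `u` is small, so the logarithmic nonlinearity `2α u² log (u²/β)` is small and `u` solves
a linear equation `u'' + u'/r = q u` with `q ≥ ω`. A maximum principle on `[r₀, ∞)` then compares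
`±u` with the supersolution `|u r₀| e^{-√ω (r - r₀)}`.
-/

open Filter Set Topology

theorem IsLocalMax.nonpos_of_hasDerivAt_deriv {f f' : ℝ → ℝ} {a f'' : ℝ} (hmax : IsLocalMax f a)
    (hf : ∀ᶠ x in 𝓝 a, HasDerivAt f (f' x) x) (hf' : HasDerivAt f' f'' a) : f'' ≤ 0 := by
  by_contra! hpos
  have hderiv : deriv f =ᶠ[𝓝 a] f' := hf.mono fun x hx => hx.deriv
  have hdd : deriv (deriv f) a = f'' := (hf'.congr_of_eventuallyEq hderiv).deriv
  have hmin : IsLocalMin f a :=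
    isLocalMin_of_deriv_deriv_pos (hdd ▸ hpos) hmax.deriv_eq_zero hf.self_of_nhds.continuousAt
  have hconst : f =ᶠ[𝓝 a] fun _ => f a :=
    (hmin.and hmax).mono fun x hx => le_antisymm hx.2 hx.1
  have hf'_zero : f' =ᶠ[𝓝 a] fun _ => 0 := by
    filter_upwards [hconst.eventuallyEq_nhds, hf] with x hfx hx
    exact hx.unique ((hasDerivAt_const x (f a)).congr_of_eventuallyEq hfx)
  exact hpos.ne' (hf'.unique ((hasDerivAt_const a 0).congr_of_eventuallyEq hf'_zero))

theorem nonpos_of_tendsto_zero_of_deriv2_pos_at_crit {h h' h'' : ℝ → ℝ} {r₀ : ℝ}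
    (hd1 : ∀ r ∈ Ici r₀, HasDerivAt h (h' r) r) (hd2 : ∀ r ∈ Ioi r₀, HasDerivAt h' (h'' r) r)
    (hcrit : ∀ r ∈ Ioi r₀, 0 < h r → h' r = 0 → 0 < h'' r)
    (h0 : h r₀ ≤ 0) (hlim : Tendsto h atTop (𝓝 0)) :
    ∀ r ∈ Ici r₀, h r ≤ 0 := by
  by_contra! ⟨x₀, hx₀, hpos⟩
  have hsmall : ∀ᶠ x in cocompact ℝ ⊓ 𝓟 (Ici r₀), h x ≤ h x₀ := by
    rw [cocompact_eq_atBot_atTop, inf_sup_right, eventually_sup]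
    refine ⟨?_, ?_⟩
    · rw [eventually_inf_principal]
      filter_upwards [eventually_lt_atBot r₀] with x hx hxI using absurd hxI (not_le.2 hx)
    · exact (hlim.eventually (eventually_le_nhds hpos)).filter_mono inf_le_left
  obtain ⟨rs, hrs, hmax⟩ := ContinuousOn.exists_isMaxOn'
    (fun x hx => (hd1 x hx).continuousAt.continuousWithinAt) isClosed_Ici hx₀ hsmall
  have hrs_pos : 0 < h rs := hpos.trans_le (hmax hx₀)
  have hrs_gt : r₀ < rs := lt_of_le_of_ne hrs (by rintro rfl; linarith)
  have hloc : IsLocalMax h rs := hmax.isLocalMax (Ici_mem_nhds hrs_gt)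
  have hcrit_rs := hcrit rs hrs_gt hrs_pos (hloc.hasDerivAt_eq_zero (hd1 rs hrs))
  have hderiv : ∀ᶠ x in 𝓝 rs, HasDerivAt h (h' x) x :=
    eventually_of_mem (Ioi_mem_nhds hrs_gt) fun x hx => hd1 x (mem_Ici.2 (le_of_lt hx))
  exact (hloc.nonpos_of_hasDerivAt_deriv hderiv (hd2 rs hrs_gt)).not_gt hcrit_rs

section LinearComparison

variable {v v' v'' p q : ℝ → ℝ} {r₀ c : ℝ}

theorem le_abs_mul_exp_of_ode (hc : 0 < c)
    (hd1 : ∀ r ∈ Ici r₀, HasDerivAt v (v' r) r) (hd2 : ∀ r ∈ Ici r₀, HasDerivAt v' (v'' r) r)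
    (hode : ∀ r ∈ Ici r₀, v'' r + p r * v' r = q r * v r)
    (hp : ∀ r ∈ Ici r₀, 0 ≤ p r) (hq : ∀ r ∈ Ici r₀, c ^ 2 ≤ q r)
    (hlim : Tendsto v atTop (𝓝 0)) :
    ∀ r ∈ Ici r₀, v r ≤ |v r₀| * Real.exp (-c * (r - r₀)) := by
  set φ : ℝ → ℝ := fun r => |v r₀| * Real.exp (-c * (r - r₀))
  have hφ_nonneg : ∀ r, 0 ≤ φ r := fun r => by positivity
  have hφ' : ∀ r, HasDerivAt φ (-c * φ r) r := fun r => by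
    have := (((hasDerivAt_id r).sub_const r₀).const_mul (-c)).exp.const_mul |v r₀|
    exact this.congr_deriv (by simp only [φ, id]; ring)
  have hφ'' : ∀ r, HasDerivAt (fun r => -c * φ r) (c ^ 2 * φ r) r := fun r =>
    ((hφ' r).const_mul (-c)).congr_deriv (by ring)
  have hφ_lim : Tendsto φ atTop (𝓝 0) := by
    have hlin : Tendsto (fun r => -c * (r - r₀)) atTop atBot :=
      (tendsto_atTop_add_const_right _ _ tendsto_id).const_mul_atTop_of_neg (neg_lt_zero.2 hc)
    simpa [φ] using (Real.tendsto_exp_atBot.comp hlin).const_mul |v r₀|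
  have key := nonpos_of_tendsto_zero_of_deriv2_pos_at_crit (h := fun r => v r - φ r)
    (h' := fun r => v' r - -c * φ r) (h'' := fun r => v'' r - c ^ 2 * φ r) (r₀ := r₀)
    (fun r hr => (hd1 r hr).sub (hφ' r)) (fun r hr => (hd2 r (mem_Ioi.1 hr).le).sub (hφ'' r))
    (fun r hr hpos hcrit => by
      have hr' : r ∈ Ici r₀ := (mem_Ioi.1 hr).le
      have hv' : v' r = -c * φ r := sub_eq_zero.1 hcrit
      have hsplit : v'' r - c ^ 2 * φ r
          = q r * (v r - φ r) + (q r - c ^ 2) * φ r + p r * (c * φ r) := by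
        linear_combination hode r hr' - p r * hv'
      have hqpos : 0 < q r := (by positivity : 0 < c ^ 2).trans_le (hq r hr')
      rw [hsplit]
      have := mul_nonneg (sub_nonneg.2 (hq r hr')) (hφ_nonneg r)
      have := mul_nonneg (hp r hr') (mul_nonneg hc.le (hφ_nonneg r))
      have := mul_pos hqpos hpos
      linarith)
    (by simp [φ, le_abs_self]) (by simpa using hlim.sub hφ_lim)
  exact fun r hr => sub_nonpos.1 (key r hr)

theorem abs_le_abs_mul_exp_of_ode (hc : 0 < c)
    (hd1 : ∀ r ∈ Ici r₀, HasDerivAt v (v' r) r) (hd2 : ∀ r ∈ Ici r₀, HasDerivAt v' (v'' r) r)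
    (hode : ∀ r ∈ Ici r₀, v'' r + p r * v' r = q r * v r)
    (hp : ∀ r ∈ Ici r₀, 0 ≤ p r) (hq : ∀ r ∈ Ici r₀, c ^ 2 ≤ q r)
    (hlim : Tendsto v atTop (𝓝 0)) :
    ∀ r ∈ Ici r₀, |v r| ≤ |v r₀| * Real.exp (-c * (r - r₀)) := by
  have hneg := le_abs_mul_exp_of_ode (v := fun r => -v r) (v' := fun r => -v' r) (v'' := fun r => -v'' r) hc
    (fun r hr => (hd1 r hr).neg) (fun r hr => (hd2 r hr).neg)
    (fun r hr => by linear_combination -hode r hr) hp hq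
    (by simpa using hlim.neg)
  intro r hr
  have hneg_r := hneg r hr
  rw [abs_neg] at hneg_r
  exact abs_le.2 ⟨by linarith, le_abs_mul_exp_of_ode hc hd1 hd2 hode hp hq hlim r hr⟩

end LinearComparison

theorem continuous_sq_mul_log_sq_div {β : ℝ} (hβ : β ≠ 0) :
    Continuous fun t : ℝ => t ^ 2 * Real.log (t ^ 2 / β) := by
  have hrepr : (fun t : ℝ => t ^ 2 * Real.log (t ^ 2 / β))
      = fun t => β * (t ^ 2 / β * Real.log (t ^ 2 / β)) := by
    ext t; field_simp
  rw [hrepr]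
  exact continuous_const.mul (Real.continuous_mul_log.comp (by fun_prop))

theorem gp_exponential_decay_general
    (α β : ℝ) (hβ : 0 < β) (ω : ℝ) (hω : 0 < ω)
    (n : ℤ)
    (u u' u'' : ℝ → ℝ)
    (hu' : ∀ r ∈ Set.Ioi (0 : ℝ), HasDerivAt u (u' r) r)
    (hu'' : ∀ r ∈ Set.Ioi (0 : ℝ), HasDerivAt u' (u'' r) r)
    (heq : ∀ r ∈ Set.Ioi (0 : ℝ),
      u'' r + u' r / r - ((n : ℝ) ^ 2 / r ^ 2 + 2 * ω) * u r
        - 2 * α * (u r) ^ 3 * Real.log ((u r) ^ 2 / β) = 0)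
    (hlim : Tendsto u atTop (nhds 0)) :
    ∃ C > (0 : ℝ), ∃ c > (0 : ℝ), ∃ r₁ > (0 : ℝ),
      ∀ r ≥ r₁, |u r| ≤ C * Real.exp (-c * r) := by
  have hnonlin : Tendsto (fun r => 2 * α * (u r ^ 2 * Real.log (u r ^ 2 / β))) atTop (𝓝 0) := by
    simpa using (((continuous_sq_mul_log_sq_div hβ.ne').tendsto 0).comp hlim).const_mul (2 * α)
  obtain ⟨r₀, hr₀⟩ := eventually_atTop.1 ((eventually_gt_atTop 0).and
    (hnonlin.eventually (eventually_gt_nhds (neg_lt_zero.2 hω))))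
  have hc : 0 < √ω := Real.sqrt_pos.2 hω
  have hdecay := abs_le_abs_mul_exp_of_ode (r₀ := r₀) (p := fun r => r⁻¹)
    (q := fun r => (n : ℝ) ^ 2 / r ^ 2 + 2 * ω + 2 * α * (u r ^ 2 * Real.log (u r ^ 2 / β))) hc
    (fun r hr => hu' r (hr₀ r hr).1) (fun r hr => hu'' r (hr₀ r hr).1)
    (fun r hr => by linear_combination heq r (hr₀ r hr).1)
    (fun r hr => inv_nonneg.2 (hr₀ r hr).1.le)
    (fun r hr => by
      rw [Real.sq_sqrt hω.le]
      have : 0 ≤ (n : ℝ) ^ 2 / r ^ 2 := by positivity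
      linarith [(hr₀ r hr).2])
    hlim
  refine ⟨(|u r₀| + 1) * Real.exp (√ω * r₀), by positivity, √ω, hc, r₀, (hr₀ r₀ le_rfl).1,
    fun r hr => (hdecay r hr).trans ?_⟩
  rw [show -√ω * (r - r₀) = √ω * r₀ + -√ω * r by ring, Real.exp_add, ← mul_assoc]
  gcongr
  linarith

/-- A nontrivial solution of the Gross–Pitaevskii vortex equation tending to
zero at infinity decays exponentially. -/
theorem gp_exponential_decay
    (α β : ℝ) (hα : 0 < α) (hβ : 0 < β) (ω : ℝ) (hω : 0 < ω)
    (n : ℤ) (hn : n ≠ 0)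
    (u u' u'' : ℝ → ℝ)
    (hu' : ∀ r ∈ Set.Ioi (0 : ℝ), HasDerivAt u (u' r) r)
    (hu'' : ∀ r ∈ Set.Ioi (0 : ℝ), HasDerivAt u' (u'' r) r)
    (hu''c : ContinuousOn u'' (Set.Ioi (0 : ℝ)))
    (heq : ∀ r ∈ Set.Ioi (0 : ℝ),
      u'' r + u' r / r - ((n : ℝ) ^ 2 / r ^ 2 + 2 * ω) * u r
        - 2 * α * (u r) ^ 3 * Real.log ((u r) ^ 2 / β) = 0)
    (hnontriv : ∃ r ∈ Set.Ioi (0 : ℝ), u r ≠ 0)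
    (hlim : Tendsto u atTop (nhds 0)) :
    ∃ C > (0 : ℝ), ∃ c > (0 : ℝ), ∃ r₁ > (0 : ℝ),
      ∀ r ≥ r₁, |u r| ≤ C * Real.exp (-c * r) :=
  gp_exponential_decay_general α β hβ ω hω n u u' u'' hu' hu'' heq hlim
end

section
/- Let r₀ > 0 and let u : (0, r₀] → ℝ be differentiable with ∫₀^{r₀} u'(r)² r dr < ∞ and ∫₀^{r₀} u(r)²/r dr < ∞. Then liminf_{r→0⁺} r·|u(r)|·|u'(r)| = 0. -/
/-!
By AM-GM, `2 r |u| |u'| ≤ r (u² / r + u'² r)`, and the bracket `g` is integrable near `0`.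
If `r g(r) ≥ c > 0` held for all small `r`, then `c / r ≤ g(r)` would be integrable near `0`,
which `1 / r` is not.
-/

open MeasureTheory Filter Set

open scoped Topology

theorem not_integrableOn_Ioc_const_div {c ε : ℝ} (hc : c ≠ 0) (hε : 0 < ε) :
    ¬ IntegrableOn (fun r => c / r) (Ioc 0 ε) := by
  intro h
  have hinv : IntegrableOn (fun r : ℝ => r⁻¹) (Ioc 0 ε) :=
    IntegrableOn.congr_fun (h.const_mul c⁻¹) (fun r _ => by field_simp) measurableSet_Ioc
  have := (intervalIntegrable_iff_integrableOn_Ioc_of_le hε.le).2 hinv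
  simp [intervalIntegrable_inv_iff, hε.ne, hε.le] at this

theorem frequently_mul_lt_of_integrableOn_Ioc {g : ℝ → ℝ} {ε c : ℝ} (hε : 0 < ε)
    (hg : IntegrableOn g (Ioc 0 ε)) (hc : 0 < c) :
    ∃ᶠ r in 𝓝[>] 0, r * g r < c := by
  by_contra h
  obtain ⟨δ, hδ, hle⟩ := mem_nhdsGT_iff_exists_Ioc_subset.1 (not_frequently.1 h)
  have hη : 0 < min δ ε := lt_min hδ hε
  refine not_integrableOn_Ioc_const_div hc.ne' hη ?_
  refine (hg.mono_set (Ioc_subset_Ioc_right (min_le_right δ ε))).mono' (by fun_prop) ?_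
  filter_upwards [ae_restrict_mem measurableSet_Ioc] with r hr
  have hcr : c ≤ r * g r := not_lt.1 (hle ⟨hr.1, hr.2.trans (min_le_left δ ε)⟩)
  rw [Real.norm_of_nonneg (div_nonneg hc.le hr.1.le), div_le_iff₀ hr.1]
  linarith

theorem liminf_eq_zero_of_frequently_lt {α : Type*} {l : Filter α} {f : α → ℝ}
    (hf : ∀ᶠ x in l, 0 ≤ f x) (h : ∀ c > 0, ∃ᶠ x in l, f x < c) :
    liminf f l = 0 := by
  have hbdd : IsBoundedUnder (· ≥ ·) l f := ⟨0, hf⟩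
  have hcobdd : IsCoboundedUnder (· ≥ ·) l f :=
    .of_frequently_le ((h 1 one_pos).mono fun _ hx => hx.le)
  refine le_antisymm ?_ (le_liminf_of_le hcobdd hf)
  refine le_of_forall_pos_le_add fun c hc => ?_
  rw [zero_add]
  exact liminf_le_of_frequently_le ((h c hc).mono fun _ hx => hx.le) hbdd

theorem two_mul_mul_abs_mul_abs_le {r : ℝ} (hr : 0 < r) (a b : ℝ) :
    2 * (r * |a| * |b|) ≤ r * (a ^ 2 / r + b ^ 2 * r) := by
  have hamgm := two_mul_le_add_sq |a| (r * |b|)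
  rw [mul_pow, sq_abs, sq_abs] at hamgm
  rw [mul_add, mul_div_cancel₀ _ hr.ne']
  linarith

theorem boundary_flux_liminf_zero_general
    (r₀ : ℝ) (hr₀ : 0 < r₀)
    (u u' : ℝ → ℝ)
    (hint1 : IntegrableOn (fun r => (u' r) ^ 2 * r) (Set.Ioc (0 : ℝ) r₀))
    (hint2 : IntegrableOn (fun r => (u r) ^ 2 / r) (Set.Ioc (0 : ℝ) r₀)) :
    Filter.liminf (fun r => r * |u r| * |u' r|)
      (nhdsWithin 0 (Set.Ioi (0 : ℝ))) = 0 := by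
  refine liminf_eq_zero_of_frequently_lt ?_ fun c hc => ?_
  · filter_upwards [self_mem_nhdsWithin] with r (hr : 0 < r)
    positivity
  · have hflux := frequently_mul_lt_of_integrableOn_Ioc (g := fun r => u r ^ 2 / r + u' r ^ 2 * r)
      hr₀ (hint2.add hint1) (mul_pos two_pos hc)
    refine (hflux.and_eventually self_mem_nhdsWithin).mono fun r ⟨hlt, (hr : 0 < r)⟩ => ?_
    linarith [two_mul_mul_abs_mul_abs_le hr (u r) (u' r)]

/-- If `∫₀^{r₀} u'² r dr < ∞` and `∫₀^{r₀} u²/r dr < ∞`, then the boundary flux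
`r·|u|·|u'|` has liminf zero as `r → 0⁺`. -/
theorem boundary_flux_liminf_zero
    (r₀ : ℝ) (hr₀ : 0 < r₀)
    (u u' : ℝ → ℝ)
    (hu' : ∀ r ∈ Set.Ioc (0 : ℝ) r₀, HasDerivAt u (u' r) r)
    (hint1 : IntegrableOn (fun r => (u' r) ^ 2 * r) (Set.Ioc (0 : ℝ) r₀))
    (hint2 : IntegrableOn (fun r => (u r) ^ 2 / r) (Set.Ioc (0 : ℝ) r₀)) :
    Filter.liminf (fun r => r * |u r| * |u' r|)
      (nhdsWithin 0 (Set.Ioi (0 : ℝ))) = 0 :=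
  boundary_flux_liminf_zero_general r₀ hr₀ u u' hint1 hint2
end

section
/- Let s > 0 and γ > 2. Then for every t ∈ ℝ: (1/(s²·(γ−1)·(γ−2)))·(1 − (1 + γ·s·t²)/(1 + s·t²)^γ) − t⁴/((γ−2)·(1 + s·t²)^γ) ≥ 0. -/
open Real

/-- Nonnegativity of the potential-energy density `q(t)` in the action
functional for the saturable vortex equation. -/
theorem saturable_potential_nonneg
    (s γ : ℝ) (hs : 0 < s) (hγ : 2 < γ) :
    ∀ t : ℝ,
      (1 / (s ^ 2 * (γ - 1) * (γ - 2)))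
          * (1 - (1 + γ * s * t ^ 2) / (1 + s * t ^ 2) ^ γ)
        - t ^ 4 / ((γ - 2) * (1 + s * t ^ 2) ^ γ) ≥ 0 := by
  intro t
  set u : ℝ := s * t ^ 2 with hu_def
  have hu : 0 ≤ u := by positivity
  have h1 : (0:ℝ) < 1 + u := by linarith
  have hP : 0 < (1 + u) ^ γ := Real.rpow_pos_of_pos h1 γ
  have hγ1 : (0:ℝ) < γ - 1 := by linarith
  have hγ2 : (0:ℝ) < γ - 2 := by linarith
  have hb : 1 + (γ / 2) * u ≤ (1 + u) ^ (γ / 2) := by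
    have := one_add_mul_self_le_rpow_one_add (by linarith : (-1:ℝ) ≤ u)
      (by linarith : (1:ℝ) ≤ γ / 2)
    linarith [this]
  have hsplit : (1 + u) ^ γ = ((1 + u) ^ (γ / 2)) ^ 2 := by
    rw [← Real.rpow_natCast ((1 + u) ^ (γ / 2)) 2, ← Real.rpow_mul h1.le]
    norm_num
  have hhalf : (0:ℝ) ≤ 1 + (γ / 2) * u := by positivity
  have key : 1 + γ * u + (γ - 1) * u ^ 2 ≤ (1 + u) ^ γ := by
    rw [hsplit]
    nlinarith [sq_nonneg (γ - 2), sq_nonneg u, mul_le_mul hb hb hhalf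
      (le_trans hhalf hb), sq_nonneg ((γ - 2) * u)]
  have ht4 : t ^ 4 = u ^ 2 / s ^ 2 := by
    field_simp [hu_def]; ring
  have hR : 1 / (s ^ 2 * (γ - 1) * (γ - 2)) * (1 - (1 + γ * s * t ^ 2) / (1 + u) ^ γ)
      = ((1 + u) ^ γ - (1 + γ * u)) / (s ^ 2 * (γ - 1) * (γ - 2) * (1 + u) ^ γ) := by
    rw [hu_def]
    field_simp
  rw [ge_iff_le, ← sub_nonneg, sub_zero, sub_nonneg, ht4, hR, div_div]
  rw [div_le_div_iff₀ (by positivity) (by positivity)]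
  have main : u ^ 2 * (γ - 1) ≤ (1 + u) ^ γ - (1 + γ * u) := by nlinarith [key]
  nlinarith [mul_le_mul_of_nonneg_right main
    (by positivity : (0:ℝ) ≤ s ^ 2 * (γ - 2) * (1 + u) ^ γ)]
end

section
/- Let α, β > 0 and let ω satisfy 0 < ω < (3/4)·e^{-1}·α·β. Then the set S = {t > 0 : ω + α·t²·ln(t²/β) = 0} is nonempty and has a largest element k, and this k satisfies k > √(β/e). -/
open Real

/-- For `0 < ω < (3/4)e⁻¹αβ`, the set of positive zeros of
`t ↦ ω + α t² ln(t²/β)` is nonempty, has a largest element `k`, and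
`k > √(β/e)`. -/
theorem gp_largest_zero_exists
    (α β : ℝ) (hα : 0 < α) (hβ : 0 < β)
    (ω : ℝ) (hω₀ : 0 < ω) (hω₁ : ω < (3 / 4) * Real.exp (-1) * α * β) :
    ∃ k : ℝ,
      IsGreatest {t : ℝ | 0 < t ∧ ω + α * t ^ 2 * Real.log (t ^ 2 / β) = 0} k ∧
      Real.sqrt (β / Real.exp 1) < k := by
  set a : ℝ := Real.sqrt (β / Real.exp 1) with ha_def
  set b : ℝ := Real.sqrt β with hb_def
  set h : ℝ → ℝ := fun t => ω + α * (t ^ 2 * (2 * Real.log t - Real.log β)) with hh_def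
  have hβe : (0:ℝ) < β / Real.exp 1 := div_pos hβ (Real.exp_pos 1)
  have ha_pos : 0 < a := Real.sqrt_pos.mpr hβe
  have hb_pos : 0 < b := Real.sqrt_pos.mpr hβ
  have ha_sq : a ^ 2 = β / Real.exp 1 := Real.sq_sqrt hβe.le
  have hb_sq : b ^ 2 = β := Real.sq_sqrt hβ.le
  have hab : a ≤ b := Real.sqrt_le_sqrt (by
    have : (1:ℝ) ≤ Real.exp 1 := by
      have := Real.add_one_le_exp (1:ℝ); linarith
    calc β / Real.exp 1 ≤ β / 1 := by
          apply div_le_div_of_nonneg_left hβ.le one_pos this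
      _ = β := by ring)
  -- f equals h on positives
  have hfh : ∀ t : ℝ, 0 < t →
      ω + α * t ^ 2 * Real.log (t ^ 2 / β) = h t := by
    intro t ht
    have : Real.log (t ^ 2 / β) = 2 * Real.log t - Real.log β := by
      rw [Real.log_div (by positivity) hβ.ne', Real.log_pow]
      push_cast; ring
    simp [hh_def, this]; ring
  -- values at endpoints
  have hha : h a = ω - α * (β / Real.exp 1) := by
    rw [← hfh a ha_pos, ha_sq]
    have : (β / Real.exp 1) / β = (Real.exp 1)⁻¹ := by
      field_simp
    rw [this, Real.log_inv, Real.log_exp]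
    ring
  have hhb : h b = ω := by
    rw [← hfh b hb_pos, hb_sq]
    rw [div_self hβ.ne', Real.log_one]
    ring
  have hha_neg : h a < 0 := by
    rw [hha]
    have h1 : (3 / 4 : ℝ) * Real.exp (-1) * α * β < Real.exp (-1) * α * β := by
      have : (0:ℝ) < Real.exp (-1) * α * β := by positivity
      nlinarith
    have h2 : Real.exp (-1) * α * β = α * (β / Real.exp 1) := by
      rw [Real.exp_neg, div_eq_mul_inv]; ring
    linarith [hω₁, h1, h2.symm ▸ h1]
  have hhb_pos : 0 < h b := by rw [hhb]; exact hω₀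
  -- continuity of h on sets of positives
  have hcont : ∀ s : Set ℝ, (∀ x ∈ s, (0:ℝ) < x) → ContinuousOn h s := by
    intro s hs
    apply continuousOn_const.add
    apply continuousOn_const.mul
    apply ContinuousOn.mul (continuous_pow 2).continuousOn
    apply ContinuousOn.sub _ continuousOn_const
    exact continuousOn_const.mul (Real.continuousOn_log.mono fun x hx => (hs x hx).ne')
  -- strict monotonicity on Ici a
  have hmono : StrictMonoOn h (Set.Ici a) := by
    apply strictMonoOn_of_deriv_pos (convex_Ici a)
      (hcont _ fun x hx => lt_of_lt_of_le ha_pos hx)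
    intro t ht
    rw [interior_Ici] at ht
    have htpos : 0 < t := lt_trans ha_pos ht
    have hd : HasDerivAt h (α * ((2 * t ^ 1) * (2 * Real.log t - Real.log β)
        + t ^ 2 * (2 * t⁻¹))) t := by
      apply HasDerivAt.const_add
      apply HasDerivAt.const_mul
      exact (hasDerivAt_pow 2 t).mul
        (((Real.hasDerivAt_log htpos.ne').const_mul 2).sub_const (Real.log β))
    rw [hd.deriv]
    have hlog : Real.log β - 1 < 2 * Real.log t := by
      have h1 : β * (Real.exp 1)⁻¹ < t ^ 2 := by
        have : a ^ 2 < t ^ 2 := by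
          exact pow_lt_pow_left₀ ht ha_pos.le (by norm_num)
        rw [ha_sq] at this; rw [div_eq_mul_inv] at this; linarith
      have h2 : Real.log (β * (Real.exp 1)⁻¹) < Real.log (t ^ 2) :=
        Real.log_lt_log (by positivity) h1
      rw [Real.log_mul hβ.ne' (by positivity), Real.log_inv, Real.log_exp,
        Real.log_pow] at h2
      push_cast at h2; linarith
    have : t ^ 2 * (2 * t⁻¹) = 2 * t := by field_simp
    rw [this]
    have : (2 * t ^ 1) * (2 * Real.log t - Real.log β) + 2 * t
        = 2 * t * (2 * Real.log t - Real.log β + 1) := by ring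
    rw [this]
    apply mul_pos hα
    apply mul_pos (by positivity)
    linarith
  -- IVT to find k
  have hIVT := intermediate_value_Icc hab (hcont _ fun x hx => lt_of_lt_of_le ha_pos hx.1)
  have h0mem : (0:ℝ) ∈ Set.Icc (h a) (h b) := ⟨hha_neg.le, hhb_pos.le⟩
  obtain ⟨k, hk_mem, hk_zero⟩ := hIVT h0mem
  have hk_gt_a : a < k := by
    rcases lt_or_eq_of_le hk_mem.1 with h' | h'
    · exact h'
    · exfalso; rw [← h'] at hk_zero; linarith
  have hk_pos : 0 < k := lt_trans ha_pos hk_gt_a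
  refine ⟨k, ⟨⟨hk_pos, by rw [hfh k hk_pos]; exact hk_zero⟩, ?_⟩, hk_gt_a⟩
  intro t ht
  obtain ⟨ht_pos, ht_zero⟩ := ht
  rw [hfh t ht_pos] at ht_zero
  by_contra hlt
  push_neg at hlt
  have : h k < h t := hmono (le_of_lt hk_gt_a) (le_of_lt (lt_trans hk_gt_a hlt)) hlt
  rw [hk_zero, ht_zero] at this
  exact lt_irrefl 0 this
end

section
/- Let s > 0, γ > 2, let n be a nonzero integer, and let P₀ > 0. Then there exist a > 0 and b > 0 with (4π/3)·a²·b² = P₀ such that the tent function u₀ defined on [0, 2a] by u₀(r) = (b/a)·r for 0 ≤ r ≤ a and u₀(r) = (b/a)·(2a − r) for a < r ≤ 2a satisfies u₀(0) = u₀(2a) = 0, 2π·∫₀^{2a} u₀(r)² r dr = P₀, and J(u₀) ≤ √(6·(1 + n²·(2·ln 2 − 1))·P₀/(π·s²·(γ−1)·(γ−2))), where J is computed with R = 2a. -/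
/-!
The quadratic part of `J(u₀)` is computed exactly: it equals `(1 + n² (2 log 2 - 1)) b²`, the
logarithm coming from `∫ₐ^{2a} (2a - r)² / r dr`. By Bernoulli's inequality the saturable
integrand `1 - (1 + γx) / (1 + x)^γ` lies in `[0, 1]`, so that term contributes at most
`(2a)² / 2` divided by `s² (γ - 1) (γ - 2)`, while the quartic term is nonnegative and enters
with a minus sign. Once the power constraint fixes `a² b²`, the bound has the form
`K b² + C / b²`, whose minimum `2 √(K C)`, attained at `b⁴ = C / K`, is the stated constant.
-/

open MeasureTheory Real Set

theorem integral_Ioc_eq_sub_of_eqOn_hasDerivAt {a b : ℝ} (hab : a ≤ b) {f g F : ℝ → ℝ}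
    (hfg : EqOn f g (Icc a b)) (hg : ContinuousOn g (Icc a b))
    (hF : ∀ x ∈ Icc a b, HasDerivAt F (g x) x) :
    IntegrableOn f (Ioc a b) ∧ ∫ x in Ioc a b, f x = F b - F a := by
  have hfg' : EqOn f g (Ioc a b) := hfg.mono Ioc_subset_Icc_self
  have hgi : IntegrableOn g (Ioc a b) := hg.integrableOn_Icc.mono_set Ioc_subset_Icc_self
  refine ⟨hgi.congr_fun hfg'.symm measurableSet_Ioc, ?_⟩
  rw [setIntegral_congr_fun measurableSet_Ioc hfg', ← intervalIntegral.integral_of_le hab,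
    intervalIntegral.integral_eq_sub_of_hasDerivAt (by rwa [uIcc_of_le hab])
      (hg.intervalIntegrable_of_Icc hab)]

theorem integral_Ioc_eq_of_hasDerivAt_piecewise {a b c : ℝ} (hab : a ≤ b) (hbc : b ≤ c)
    {f g₁ g₂ F₁ F₂ : ℝ → ℝ}
    (hf₁ : EqOn f g₁ (Icc a b)) (hg₁ : ContinuousOn g₁ (Icc a b))
    (hF₁ : ∀ x ∈ Icc a b, HasDerivAt F₁ (g₁ x) x)
    (hf₂ : EqOn f g₂ (Icc b c)) (hg₂ : ContinuousOn g₂ (Icc b c))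
    (hF₂ : ∀ x ∈ Icc b c, HasDerivAt F₂ (g₂ x) x) :
    ∫ x in Ioc a c, f x = (F₁ b - F₁ a) + (F₂ c - F₂ b) := by
  obtain ⟨hi₁, he₁⟩ := integral_Ioc_eq_sub_of_eqOn_hasDerivAt hab hf₁ hg₁ hF₁
  obtain ⟨hi₂, he₂⟩ := integral_Ioc_eq_sub_of_eqOn_hasDerivAt hbc hf₂ hg₂ hF₂
  rw [← Ioc_union_Ioc_eq_Ioc hab hbc, setIntegral_union (Ioc_disjoint_Ioc_of_le le_rfl)
    measurableSet_Ioc hi₁ hi₂, he₁, he₂]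

noncomputable def tent (a b r : ℝ) : ℝ := if r ≤ a then b / a * r else b / a * (2 * a - r)

noncomputable def tentDeriv (a b r : ℝ) : ℝ := if r ≤ a then b / a else -(b / a)

section Tent

variable {a : ℝ} (b : ℝ)

theorem tent_of_le {r : ℝ} (hr : r ≤ a) : tent a b r = b / a * r := if_pos hr

theorem tent_of_ge {r : ℝ} (hr : a ≤ r) : tent a b r = b / a * (2 * a - r) := by
  rcases hr.lt_or_eq with hr | rfl
  · exact if_neg hr.not_ge
  · simp only [tent, le_refl, if_true]; ring

theorem tent_zero (ha : 0 ≤ a) : tent a b 0 = 0 := by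
  rw [tent_of_le b ha, mul_zero]

theorem tent_two_mul (ha : 0 ≤ a) : tent a b (2 * a) = 0 := by
  rw [tent_of_ge b (by linarith), sub_self, mul_zero]

theorem tentDeriv_sq (r : ℝ) : tentDeriv a b r ^ 2 = (b / a) ^ 2 := by
  unfold tentDeriv; split_ifs <;> ring

theorem integral_tent_sq_mul (ha : 0 < a) :
    ∫ r in Ioc 0 (2 * a), tent a b r ^ 2 * r = 2 * a ^ 2 * b ^ 2 / 3 := by
  rw [integral_Ioc_eq_of_hasDerivAt_piecewise ha.le (by linarith)
    (g₁ := fun r => (b / a) ^ 2 * r ^ 3) (F₁ := fun r => (b / a) ^ 2 / 4 * r ^ 4)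
    (g₂ := fun r => (b / a) ^ 2 * (4 * a ^ 2 * r - 4 * a * r ^ 2 + r ^ 3))
    (F₂ := fun r => (b / a) ^ 2 * (2 * a ^ 2 * r ^ 2 - 4 * a / 3 * r ^ 3 + r ^ 4 / 4))]
  · field_simp; ring
  · intro r hr; simp only [tent_of_le b hr.2]; ring
  · fun_prop
  · intro r _
    refine ((hasDerivAt_pow 4 r).const_mul ((b / a) ^ 2 / 4)).congr_deriv ?_
    push_cast; ring
  · intro r hr; simp only [tent_of_ge b hr.1]; ring
  · fun_prop
  · intro r _
    refine (((((hasDerivAt_pow 2 r).const_mul (2 * a ^ 2)).sub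
      ((hasDerivAt_pow 3 r).const_mul (4 * a / 3))).add
      ((hasDerivAt_pow 4 r).div_const 4)).const_mul ((b / a) ^ 2)).congr_deriv ?_
    push_cast; ring

theorem integral_tent_dirichlet_energy (m : ℝ) (ha : 0 < a) :
    ∫ r in Ioc 0 (2 * a), (tentDeriv a b r ^ 2 + m / r ^ 2 * tent a b r ^ 2) * r
      = 2 * b ^ 2 + m * b ^ 2 * (4 * log 2 - 2) := by
  rw [integral_Ioc_eq_of_hasDerivAt_piecewise ha.le (by linarith)
    (g₁ := fun r => (1 + m) * (b / a) ^ 2 * r)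
    (F₁ := fun r => (1 + m) * (b / a) ^ 2 / 2 * r ^ 2)
    (g₂ := fun r => (b / a) ^ 2 * ((1 + m) * r + 4 * m * a ^ 2 / r - 4 * m * a))
    (F₂ := fun r => (b / a) ^ 2 * ((1 + m) / 2 * r ^ 2 + 4 * m * a ^ 2 * log r - 4 * m * a * r))]
  · rw [log_mul two_ne_zero ha.ne']; field_simp; ring
  · intro r hr
    simp only [tentDeriv_sq, tent_of_le b hr.2]
    rcases hr.1.eq_or_lt with rfl | hr0
    · simp
    · field_simp
  · fun_prop
  · intro r _
    refine ((hasDerivAt_pow 2 r).const_mul ((1 + m) * (b / a) ^ 2 / 2)).congr_deriv ?_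
    push_cast; ring
  · intro r hr
    have hr0 : r ≠ 0 := (ha.trans_le hr.1).ne'
    simp only [tentDeriv_sq, tent_of_ge b hr.1]
    field_simp; ring
  · have : ∀ r ∈ Icc a (2 * a), r ≠ 0 := fun r hr => (ha.trans_le hr.1).ne'
    fun_prop (disch := assumption)
  · intro r hr
    have hr0 : r ≠ 0 := (ha.trans_le hr.1).ne'
    refine (((((hasDerivAt_pow 2 r).const_mul ((1 + m) / 2)).add
      ((hasDerivAt_log hr0).const_mul (4 * m * a ^ 2))).sub
      ((hasDerivAt_id r).const_mul (4 * m * a))).const_mul ((b / a) ^ 2)).congr_deriv ?_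
    field_simp; ring

end Tent

theorem one_sub_div_one_add_rpow_mem_Icc {x γ : ℝ} (hx : 0 ≤ x) (hγ : 1 ≤ γ) :
    1 - (1 + γ * x) / (1 + x) ^ γ ∈ Icc 0 1 := by
  have hle : (1 + γ * x) / (1 + x) ^ γ ≤ 1 :=
    div_le_one_of_le₀ (one_add_mul_self_le_rpow_one_add (by linarith) hγ)
      (rpow_nonneg (by linarith) γ)
  have hnonneg : 0 ≤ (1 + γ * x) / (1 + x) ^ γ := by
    have : 0 ≤ γ := by linarith
    positivity
  constructor <;> linarith

noncomputable def saturableAction (s γ m R : ℝ) (u u' : ℝ → ℝ) : ℝ :=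
  (1 / 2) * (∫ r in Ioc 0 R, (u' r ^ 2 + m / r ^ 2 * u r ^ 2) * r)
    + (1 / (s ^ 2 * (γ - 1) * (γ - 2))) *
      (∫ r in Ioc 0 R, (1 - (1 + γ * s * u r ^ 2) / (1 + s * u r ^ 2) ^ γ) * r)
    - (1 / (γ - 2)) * ∫ r in Ioc 0 R, u r ^ 4 / (1 + s * u r ^ 2) ^ γ * r

theorem integral_saturation_le {s γ R : ℝ} (hs : 0 ≤ s) (hγ : 1 ≤ γ) (hR : 0 ≤ R)
    (u : ℝ → ℝ) :
    ∫ r in Ioc 0 R, (1 - (1 + γ * s * u r ^ 2) / (1 + s * u r ^ 2) ^ γ) * r ≤ R ^ 2 / 2 := by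
  have hbounds : ∀ r ∈ Ioc 0 R,
      0 ≤ (1 - (1 + γ * s * u r ^ 2) / (1 + s * u r ^ 2) ^ γ) * r ∧
        (1 - (1 + γ * s * u r ^ 2) / (1 + s * u r ^ 2) ^ γ) * r ≤ r := by
    intro r hr
    have h := one_sub_div_one_add_rpow_mem_Icc (by positivity : 0 ≤ s * u r ^ 2) hγ
    rw [← mul_assoc] at h
    exact ⟨mul_nonneg h.1 hr.1.le, mul_le_of_le_one_left hr.1.le h.2⟩
  calc _ ≤ ∫ r in Ioc 0 R, r :=
        integral_mono_of_nonneg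
          ((ae_restrict_iff' measurableSet_Ioc).2 (ae_of_all _ fun r hr => (hbounds r hr).1))
          continuous_id.integrableOn_Ioc
          ((ae_restrict_iff' measurableSet_Ioc).2 (ae_of_all _ fun r hr => (hbounds r hr).2))
    _ = R ^ 2 / 2 := by rw [← intervalIntegral.integral_of_le hR, integral_id]; ring

theorem saturableAction_le {s γ R : ℝ} (hs : 0 ≤ s) (hγ : 2 ≤ γ) (m : ℝ) (hR : 0 ≤ R)
    (u u' : ℝ → ℝ) :
    saturableAction s γ m R u u'
      ≤ (1 / 2) * (∫ r in Ioc 0 R, (u' r ^ 2 + m / r ^ 2 * u r ^ 2) * r)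
        + (1 / (s ^ 2 * (γ - 1) * (γ - 2))) * (R ^ 2 / 2) := by
  have hD : 0 ≤ 1 / (s ^ 2 * (γ - 1) * (γ - 2)) :=
    one_div_nonneg.2 (mul_nonneg (mul_nonneg (sq_nonneg s) (by linarith)) (by linarith))
  have hsat :=
    mul_le_mul_of_nonneg_left (integral_saturation_le hs (by linarith : 1 ≤ γ) hR u) hD
  have hquartic : 0 ≤ (1 / (γ - 2)) * ∫ r in Ioc 0 R, u r ^ 4 / (1 + s * u r ^ 2) ^ γ * r :=
    mul_nonneg (one_div_nonneg.2 (by linarith))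
      (setIntegral_nonneg measurableSet_Ioc fun r hr => by have := hr.1.le; positivity)
  rw [saturableAction]
  linarith

theorem saturableAction_tent_le {s γ a : ℝ} (hs : 0 ≤ s) (hγ : 2 ≤ γ) (m : ℝ) (ha : 0 < a)
    (b : ℝ) :
    saturableAction s γ m (2 * a) (tent a b) (tentDeriv a b)
      ≤ (1 + m * (2 * log 2 - 1)) * b ^ 2
        + (1 / (s ^ 2 * (γ - 1) * (γ - 2))) * (2 * a ^ 2) :=
  (saturableAction_le hs hγ m (by linarith) _ _).trans_eq <| by
    rw [integral_tent_dirichlet_energy b m ha]; ring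

theorem exists_pos_mul_sq_add_div_sq_eq_sqrt {K C : ℝ} (hK : 0 < K) (hC : 0 < C) :
    ∃ b > 0, K * b ^ 2 + C / b ^ 2 = √(4 * K * C) := by
  set t := √(C / K)
  have ht : 0 < t := sqrt_pos.2 (div_pos hC hK)
  have hKt : K * t = √(K * C) := by
    rw [← sqrt_sq (by positivity : 0 ≤ K * t), mul_pow, sq_sqrt (by positivity)]
    field_simp
  have hCt : C / t = √(K * C) := by
    rw [← sqrt_sq (by positivity : 0 ≤ C / t), div_pow, sq_sqrt (by positivity)]
    field_simp
  refine ⟨√t, sqrt_pos.2 ht, ?_⟩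
  rw [sq_sqrt ht.le, hKt, hCt, mul_assoc, sqrt_mul zero_le_four,
    show (4 : ℝ) = 2 ^ 2 by norm_num, sqrt_sq zero_le_two]
  ring

theorem saturable_tent_test_function_general
    (s γ : ℝ) (hs : 0 < s) (hγ : 2 < γ)
    (n : ℤ) (P₀ : ℝ) (hP₀ : 0 < P₀) :
    ∃ a > (0 : ℝ), ∃ b > (0 : ℝ),
      (4 * Real.pi / 3) * a ^ 2 * b ^ 2 = P₀ ∧
      ∃ u₀ u₀' : ℝ → ℝ,
        (∀ r : ℝ, u₀ r = if r ≤ a then (b / a) * r else (b / a) * (2 * a - r)) ∧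
        (∀ r : ℝ, u₀' r = if r ≤ a then b / a else -(b / a)) ∧
        u₀ 0 = 0 ∧ u₀ (2 * a) = 0 ∧
        2 * Real.pi * (∫ r in Set.Ioc (0 : ℝ) (2 * a), (u₀ r) ^ 2 * r) = P₀ ∧
        (1 / 2) * (∫ r in Set.Ioc (0 : ℝ) (2 * a),
              ((u₀' r) ^ 2 + ((n : ℝ) ^ 2 / r ^ 2) * (u₀ r) ^ 2) * r)
          + (1 / (s ^ 2 * (γ - 1) * (γ - 2))) * (∫ r in Set.Ioc (0 : ℝ) (2 * a),
              (1 - (1 + γ * s * (u₀ r) ^ 2) / (1 + s * (u₀ r) ^ 2) ^ γ) * r)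
          - (1 / (γ - 2)) * (∫ r in Set.Ioc (0 : ℝ) (2 * a),
              (u₀ r) ^ 4 / (1 + s * (u₀ r) ^ 2) ^ γ * r)
        ≤ Real.sqrt (6 * (1 + (n : ℝ) ^ 2 * (2 * Real.log 2 - 1)) * P₀
            / (Real.pi * s ^ 2 * (γ - 1) * (γ - 2))) := by
  set K := 1 + (n : ℝ) ^ 2 * (2 * log 2 - 1)
  set D := s ^ 2 * (γ - 1) * (γ - 2) with hD_def
  have hK : 0 < K := by nlinarith [sq_nonneg (n : ℝ), log_two_gt_d9]
  have hD : 0 < D := mul_pos (mul_pos (pow_pos hs 2) (by linarith)) (by linarith)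
  obtain ⟨b, hb, hbound⟩ :=
    exists_pos_mul_sq_add_div_sq_eq_sqrt hK (by positivity : 0 < 3 * P₀ / (2 * π * D))
  obtain ⟨a, ha, ha2⟩ : ∃ a > 0, 4 * π * (a ^ 2 * b ^ 2) = 3 * P₀ := by
    refine ⟨√(3 * P₀ / (4 * π)) / b, by positivity, ?_⟩
    rw [div_pow, sq_sqrt (by positivity), div_mul_cancel₀ _ (by positivity)]
    field_simp
  refine ⟨a, ha, b, hb, by linear_combination ha2 / 3, tent a b, tentDeriv a b,
    fun _ => rfl, fun _ => rfl, tent_zero b ha.le, tent_two_mul b ha.le, ?_, ?_⟩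
  · rw [integral_tent_sq_mul b ha]; linear_combination ha2 / 3
  · calc _ ≤ K * b ^ 2 + (1 / D) * (2 * a ^ 2) := saturableAction_tent_le hs.le hγ.le _ ha b
      _ = K * b ^ 2 + 3 * P₀ / (2 * π * D) / b ^ 2 := by
          congr 1; rw [eq_div_iff (by positivity)]; field_simp; linear_combination ha2
      _ = _ := by rw [hbound, hD_def]; congr 1; field_simp; ring

/-- The tent test function `u₀` has beam power `P₀` and its action `J(u₀)`
(computed on `[0, 2a]`, with the piecewise derivative `u₀'`) satisfies the
stated optimal bound. -/
theorem saturable_tent_test_function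
    (s γ : ℝ) (hs : 0 < s) (hγ : 2 < γ)
    (n : ℤ) (hn : n ≠ 0) (P₀ : ℝ) (hP₀ : 0 < P₀) :
    ∃ a > (0 : ℝ), ∃ b > (0 : ℝ),
      (4 * Real.pi / 3) * a ^ 2 * b ^ 2 = P₀ ∧
      ∃ u₀ u₀' : ℝ → ℝ,
        (∀ r : ℝ, u₀ r = if r ≤ a then (b / a) * r else (b / a) * (2 * a - r)) ∧
        (∀ r : ℝ, u₀' r = if r ≤ a then b / a else -(b / a)) ∧
        u₀ 0 = 0 ∧ u₀ (2 * a) = 0 ∧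
        2 * Real.pi * (∫ r in Set.Ioc (0 : ℝ) (2 * a), (u₀ r) ^ 2 * r) = P₀ ∧
        (1 / 2) * (∫ r in Set.Ioc (0 : ℝ) (2 * a),
              ((u₀' r) ^ 2 + ((n : ℝ) ^ 2 / r ^ 2) * (u₀ r) ^ 2) * r)
          + (1 / (s ^ 2 * (γ - 1) * (γ - 2))) * (∫ r in Set.Ioc (0 : ℝ) (2 * a),
              (1 - (1 + γ * s * (u₀ r) ^ 2) / (1 + s * (u₀ r) ^ 2) ^ γ) * r)
          - (1 / (γ - 2)) * (∫ r in Set.Ioc (0 : ℝ) (2 * a),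
              (u₀ r) ^ 4 / (1 + s * (u₀ r) ^ 2) ^ γ * r)
        ≤ Real.sqrt (6 * (1 + (n : ℝ) ^ 2 * (2 * Real.log 2 - 1)) * P₀
            / (Real.pi * s ^ 2 * (γ - 1) * (γ - 2))) :=
  saturable_tent_test_function_general s γ hs hγ n P₀ hP₀
end
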